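/- For every integer n ≥ 1, \;2\sum_{k=0}^{n-1}\frac{\binom{2n-1}{2k}}{\binom{n-1}{k}} = \sum_{k=0}^{n-1}\frac{\binom{2n}{2k+1}}{\binom{n-1}{k}}, where the sums are taken in ℚ. (Equivalently, (n-1)!\sum_{k=0}^{n-1}\binom{2n-1}{2k}/\binom{n-1}{k} = \frac{(n-1)!}{2}\sum_{k=0}^{n-1}\binom{2n}{2k+1}/\binom{n-1}{k}; both sides equal the sequence A087547.) -/
import Mathlib


theorem two_mul_sum_choose_div_eq (n : ℕ) (hn : 1 ≤ n) :
    2 * ∑ k ∈ Finset.range n,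
          (Nat.choose (2 * n - 1) (2 * k) : ℚ) / (Nat.choose (n - 1) k : ℚ) =
      ∑ k ∈ Finset.range n,
          (Nat.choose (2 * n) (2 * k + 1) : ℚ) / (Nat.choose (n - 1) k : ℚ) := by
  obtain ⟨m, rfl⟩ : ∃ m, n = m + 1 := ⟨n - 1, (Nat.succ_pred_eq_of_pos hn).symm⟩
  have hsub : (m + 1) - 1 = m := rfl
  have h2n : 2 * (m + 1) - 1 = 2 * m + 1 := by omega
  rw [hsub, h2n]
  have hpascal : ∀ k, (Nat.choose (2 * (m + 1)) (2 * k + 1) : ℚ) =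
      (Nat.choose (2 * m + 1) (2 * k) : ℚ) + (Nat.choose (2 * m + 1) (2 * k + 1) : ℚ) := by
    intro k
    have : 2 * (m + 1) = (2 * m + 1) + 1 := by omega
    rw [this, Nat.choose_succ_succ]
    push_cast
    ring
  have hodd : ∑ k ∈ Finset.range (m + 1),
      (Nat.choose (2 * m + 1) (2 * k + 1) : ℚ) / (Nat.choose m k : ℚ) =
      ∑ k ∈ Finset.range (m + 1),
      (Nat.choose (2 * m + 1) (2 * k) : ℚ) / (Nat.choose m k : ℚ) := by
    rw [← Finset.sum_range_reflect]
    refine Finset.sum_congr rfl fun k hk => ?_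
    have hk' : k ≤ m := Nat.lt_succ_iff.mp (Finset.mem_range.mp hk)
    have h1 : m + 1 - 1 - k = m - k := by omega
    rw [h1]
    have h2 : 2 * (m - k) + 1 = (2 * m + 1) - 2 * k := by omega
    rw [h2, Nat.choose_symm (by omega), Nat.choose_symm hk']
  calc 2 * ∑ k ∈ Finset.range (m + 1),
        (Nat.choose (2 * m + 1) (2 * k) : ℚ) / (Nat.choose m k : ℚ)
      = ∑ k ∈ Finset.range (m + 1),
        ((Nat.choose (2 * m + 1) (2 * k) : ℚ) / (Nat.choose m k : ℚ)
          + (Nat.choose (2 * m + 1) (2 * k + 1) : ℚ) / (Nat.choose m k : ℚ)) := by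
        rw [Finset.sum_add_distrib, hodd]; ring
    _ = ∑ k ∈ Finset.range (m + 1),
        (Nat.choose (2 * (m + 1)) (2 * k + 1) : ℚ) / (Nat.choose m k : ℚ) := by
        refine Finset.sum_congr rfl fun k _ => ?_
        rw [hpascal, add_div]
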